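/- arXiv:2303.17824 — 3 statements merged into one kernel-verified Lean document; each statement's English description precedes it below -/
import Mathlib

section
/- Let A be an invertible D×D matrix and h small enough that I - h·A_h is invertible, where A_h = ∑_{k≥0} ((-1)^k h^k / (k+1)!) A^{k+1}. Then for every vector x, (I - h A_h)^{-1} x = e^{Ah} x; that is, one step of the implicit Euler method applied to the linear vector field y ↦ A_h y exactly reproduces the time-h flow of y' = A y. -/
open NormedSpace Matrix

theorem inv_factorial_smul_neg_smul_pow_succ {𝕂 𝔸 : Type*} [Field 𝕂] [CharZero 𝕂] [Ring 𝔸]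
    [Algebra 𝕂 𝔸] (t : 𝕂) (a : 𝔸) (k : ℕ) :
    ((Nat.factorial (k + 1) : 𝕂))⁻¹ • (-(t • a)) ^ (k + 1)
      = -(t • (((-1) ^ k * t ^ k / (Nat.factorial (k + 1) : 𝕂)) • a ^ (k + 1))) := by
  rw [← neg_smul, smul_pow, smul_smul, smul_smul, ← neg_smul]
  congr 1
  field_simp
  ring

/-- The series of the modified vector field of implicit Euler is the exponential series of
`-(t • a)` without its constant term, divided by `-t`. -/
theorem exp_neg_smul_eq_one_sub_smul_tsum {𝕂 𝔸 : Type*} [RCLike 𝕂] [NormedRing 𝔸]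
    [NormedAlgebra 𝕂 𝔸] [CompleteSpace 𝔸] (t : 𝕂) (a : 𝔸) :
    exp (-(t • a))
      = 1 - t • ∑' k : ℕ, ((-1) ^ k * t ^ k / (Nat.factorial (k + 1) : 𝕂)) • a ^ (k + 1) := by
  rw [← (exp_series_hasSum_exp' (𝕂 := 𝕂) (-(t • a))).tsum_eq,
    (expSeries_summable' (𝕂 := 𝕂) (-(t • a))).tsum_eq_zero_add]
  simp only [Nat.factorial_zero, Nat.cast_one, inv_one, pow_zero, one_smul,
    inv_factorial_smul_neg_smul_pow_succ, tsum_neg, tsum_const_smul'', sub_eq_add_neg]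

theorem Matrix.inv_exp_neg {n 𝕂 : Type*} [Fintype n] [DecidableEq n] [RCLike 𝕂]
    (A : Matrix n n 𝕂) : (exp (-A))⁻¹ = exp A := by
  rw [Matrix.exp_neg, nonsing_inv_nonsing_inv _ ((isUnit_iff_isUnit_det _).mp (isUnit_exp A))]

-- Any norm would do: it only makes the matrices a complete normed algebra, for the exponential series.
attribute [local instance] Matrix.linftyOpNormedRing Matrix.linftyOpNormedAlgebra

theorem stmt_1_general (D : ℕ) (A : Matrix (Fin D) (Fin D) ℝ) (h : ℝ)
    (Ah : Matrix (Fin D) (Fin D) ℝ)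
    (hAh : Ah = ∑' k : ℕ, (((-1 : ℝ) ^ k * h ^ k / (Nat.factorial (k + 1) : ℝ)) • A ^ (k + 1))) :
    ∀ x : Fin D → ℝ, (1 - h • Ah)⁻¹ *ᵥ x = exp (h • A) *ᵥ x := by
  intro x
  have implicit_euler_denominator : 1 - h • Ah = exp (-(h • A)) := by
    rw [hAh]
    exact (exp_neg_smul_eq_one_sub_smul_tsum h A).symm
  rw [implicit_euler_denominator, Matrix.inv_exp_neg]

/-- For an invertible `A` and `h` such that `I - h • A_h` is invertible,
where `A_h = ∑_{k≥0} ((-1)^k h^k/(k+1)!) A^{k+1}`, one implicit Euler step with the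
linear IMDE vector field `y ↦ A_h y` exactly reproduces the time-`h` flow of `y' = Ay`:
`(I - h A_h)⁻¹ x = e^{Ah} x` for every vector `x`. -/
theorem stmt_1 (D : ℕ) (A : Matrix (Fin D) (Fin D) ℝ) (hA : IsUnit A) (h : ℝ)
    (Ah : Matrix (Fin D) (Fin D) ℝ)
    (hAh : Ah = ∑' k : ℕ, (((-1 : ℝ) ^ k * h ^ k / (Nat.factorial (k + 1) : ℝ)) • A ^ (k + 1)))
    (hinv : IsUnit (1 - h • Ah)) :
    ∀ x : Fin D → ℝ, (1 - h • Ah)⁻¹ *ᵥ x = exp (h • A) *ᵥ x :=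
  stmt_1_general D A h Ah hAh
end

section
/- (Teacher-forcing loss bounds M-step shooting loss) Let Ψ : ℝ^D → ℝ^D be Lipschitz with constant C_L and let φ_m := φ_{mΔt}(x) denote points of an exact trajectory (so φ_m = φ_Δt applied m times to x). Then for each 1 ≤ m ≤ M, ‖Ψ^m(x) − φ_m‖² / m² ≤ C_L^{2(M−1)} · ∑_{i=1}^{M} ‖Ψ(φ_{i−1}) − φ_i‖², where Ψ^m denotes m-fold composition. -/
lemma stmt_11_key (D : ℕ) (Ψ : EuclideanSpace ℝ (Fin D) → EuclideanSpace ℝ (Fin D))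
    (C : ℝ) (hC : 1 ≤ C) (hLip : ∀ a b, ‖Ψ a - Ψ b‖ ≤ C * ‖a - b‖)
    (x : EuclideanSpace ℝ (Fin D)) (φ : ℕ → EuclideanSpace ℝ (Fin D)) (hφ0 : φ 0 = x) :
    ∀ m, 1 ≤ m →
      ‖Ψ^[m] x - φ m‖ ≤ ∑ i ∈ Finset.Icc 1 m, C ^ (m - i) * ‖Ψ (φ (i - 1)) - φ i‖ := by
  intro m hm
  induction m with
  | zero => omega
  | succ n ih =>
    rcases Nat.eq_or_lt_of_le hm with h1 | h1
    · have hn : n = 0 := by omega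
      subst hn
      simp [hφ0]
    · have hn : 1 ≤ n := by omega
      have ih' := ih hn
      have step : ‖Ψ^[n+1] x - φ (n+1)‖ ≤ C * ‖Ψ^[n] x - φ n‖ + ‖Ψ (φ n) - φ (n+1)‖ := by
        have heq : Ψ^[n+1] x - φ (n+1) = (Ψ (Ψ^[n] x) - Ψ (φ n)) + (Ψ (φ n) - φ (n+1)) := by
          rw [Function.iterate_succ_apply']
          abel
        rw [heq]
        calc ‖(Ψ (Ψ^[n] x) - Ψ (φ n)) + (Ψ (φ n) - φ (n+1))‖
            ≤ ‖Ψ (Ψ^[n] x) - Ψ (φ n)‖ + ‖Ψ (φ n) - φ (n+1)‖ := norm_add_le _ _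
          _ ≤ C * ‖Ψ^[n] x - φ n‖ + ‖Ψ (φ n) - φ (n+1)‖ := by
              gcongr; exact hLip _ _
      have hsum : C * (∑ i ∈ Finset.Icc 1 n, C ^ (n - i) * ‖Ψ (φ (i - 1)) - φ i‖)
          + ‖Ψ (φ n) - φ (n+1)‖
          = ∑ i ∈ Finset.Icc 1 (n+1), C ^ (n + 1 - i) * ‖Ψ (φ (i - 1)) - φ i‖ := by
        rw [Finset.sum_Icc_succ_top (by omega : 1 ≤ n + 1), Finset.mul_sum]
        congr 1
        · apply Finset.sum_congr rfl
          intro i hi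
          simp only [Finset.mem_Icc] at hi
          rw [← mul_assoc, ← pow_succ']
          congr 2
          omega
        · simp
      calc ‖Ψ^[n+1] x - φ (n+1)‖ ≤ C * ‖Ψ^[n] x - φ n‖ + ‖Ψ (φ n) - φ (n+1)‖ := step
        _ ≤ C * (∑ i ∈ Finset.Icc 1 n, C ^ (n - i) * ‖Ψ (φ (i - 1)) - φ i‖)
              + ‖Ψ (φ n) - φ (n+1)‖ :=
            add_le_add (mul_le_mul_of_nonneg_left ih' (by linarith)) le_rfl
        _ = _ := hsum

/-- (Teacher-forcing loss bounds M-step shooting loss) Let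
`Ψ : ℝ^D → ℝ^D` be Lipschitz with constant `C ≥ 1` and `φ m` the points of an exact
trajectory starting at `φ 0 = x`. Then for each `1 ≤ m ≤ M`,
`‖Ψ^[m] x − φ m‖²/m² ≤ C^(2(M−1)) ∑_{i=1}^{M} ‖Ψ (φ (i−1)) − φ i‖²` (Euclidean norm). -/
theorem stmt_11 (D : ℕ) (Ψ : EuclideanSpace ℝ (Fin D) → EuclideanSpace ℝ (Fin D))
    (C : ℝ) (hC : 1 ≤ C) (hLip : ∀ a b, ‖Ψ a - Ψ b‖ ≤ C * ‖a - b‖)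
    (x : EuclideanSpace ℝ (Fin D)) (φ : ℕ → EuclideanSpace ℝ (Fin D)) (hφ0 : φ 0 = x)
    (M : ℕ) :
    ∀ m, 1 ≤ m → m ≤ M →
      ‖Ψ^[m] x - φ m‖ ^ 2 / (m : ℝ) ^ 2 ≤
        C ^ (2 * (M - 1)) * ∑ i ∈ Finset.Icc 1 M, ‖Ψ (φ (i - 1)) - φ i‖ ^ 2 := by
  intro m hm hmM
  have key := stmt_11_key D Ψ C hC hLip x φ hφ0 m hm
  have hC0 : (0:ℝ) ≤ C := by linarith
  have h1 : ‖Ψ^[m] x - φ m‖ ^ 2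
      ≤ (∑ i ∈ Finset.Icc 1 m, C ^ (m - i) * ‖Ψ (φ (i - 1)) - φ i‖) ^ 2 :=
    pow_le_pow_left₀ (norm_nonneg _) key 2
  have h2 : (∑ i ∈ Finset.Icc 1 m, C ^ (m - i) * ‖Ψ (φ (i - 1)) - φ i‖) ^ 2
      ≤ (m : ℝ) * ∑ i ∈ Finset.Icc 1 m, (C ^ (m - i) * ‖Ψ (φ (i - 1)) - φ i‖) ^ 2 := by
    have := sq_sum_le_card_mul_sum_sq (s := Finset.Icc 1 m)
      (f := fun i => C ^ (m - i) * ‖Ψ (φ (i - 1)) - φ i‖)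
    simpa [Nat.card_Icc] using this
  have h3 : ∑ i ∈ Finset.Icc 1 m, (C ^ (m - i) * ‖Ψ (φ (i - 1)) - φ i‖) ^ 2
      ≤ C ^ (2 * (M - 1)) * ∑ i ∈ Finset.Icc 1 M, ‖Ψ (φ (i - 1)) - φ i‖ ^ 2 := by
    rw [Finset.mul_sum]
    calc ∑ i ∈ Finset.Icc 1 m, (C ^ (m - i) * ‖Ψ (φ (i - 1)) - φ i‖) ^ 2
        ≤ ∑ i ∈ Finset.Icc 1 m, C ^ (2 * (M - 1)) * ‖Ψ (φ (i - 1)) - φ i‖ ^ 2 := by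
          apply Finset.sum_le_sum
          intro i hi
          simp only [Finset.mem_Icc] at hi
          rw [mul_pow, ← pow_mul]
          exact mul_le_mul_of_nonneg_right
            (pow_le_pow_right₀ hC (by omega)) (sq_nonneg _)
      _ ≤ ∑ i ∈ Finset.Icc 1 M, C ^ (2 * (M - 1)) * ‖Ψ (φ (i - 1)) - φ i‖ ^ 2 := by
          apply Finset.sum_le_sum_of_subset_of_nonneg
            (Finset.Icc_subset_Icc le_rfl hmM)
          intro i _ _
          positivity
  have hm0 : (0:ℝ) < (m : ℝ) := by exact_mod_cast hm
  have hS : (0:ℝ) ≤ C ^ (2 * (M - 1)) * ∑ i ∈ Finset.Icc 1 M, ‖Ψ (φ (i - 1)) - φ i‖ ^ 2 := by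
    apply mul_nonneg (by positivity)
    exact Finset.sum_nonneg fun i _ => sq_nonneg _
  rw [div_le_iff₀ (by positivity)]
  have hmm : (1:ℝ) ≤ (m:ℝ) := by exact_mod_cast hm
  nlinarith [h1, h2, h3]
end

section
/- (Shooting loss bounds teacher-forcing loss) With Ψ : ℝ^D → ℝ^D Lipschitz of constant C_L and φ_m = φ_{mΔt}(x) the exact trajectory, for each 1 ≤ m ≤ M: ‖Ψ(φ_{m−1}) − φ_m‖² ≤ 2(C_L² + 1) · M² · ∑_{j=1}^{M} ‖Ψ^j(x) − φ_j‖²/j². -/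
/-- (Shooting loss bounds teacher-forcing loss) With `Ψ : ℝ^D → ℝ^D`
Lipschitz of constant `C` and `φ m` the exact trajectory with `φ 0 = x`, for each
`1 ≤ m ≤ M`:
`‖Ψ (φ (m−1)) − φ m‖² ≤ 2(C² + 1) M² ∑_{j=1}^{M} ‖Ψ^[j] x − φ j‖²/j²` (Euclidean norm). -/
theorem stmt_12 (D : ℕ) (Ψ : EuclideanSpace ℝ (Fin D) → EuclideanSpace ℝ (Fin D))
    (C : ℝ) (hC : 0 ≤ C) (hLip : ∀ a b, ‖Ψ a - Ψ b‖ ≤ C * ‖a - b‖)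
    (x : EuclideanSpace ℝ (Fin D)) (φ : ℕ → EuclideanSpace ℝ (Fin D)) (hφ0 : φ 0 = x)
    (M : ℕ) :
    ∀ m, 1 ≤ m → m ≤ M →
      ‖Ψ (φ (m - 1)) - φ m‖ ^ 2 ≤
        2 * (C ^ 2 + 1) * (M : ℝ) ^ 2 *
          ∑ j ∈ Finset.Icc 1 M, ‖Ψ^[j] x - φ j‖ ^ 2 / (j : ℝ) ^ 2 := by
  intro m hm1 hmM
  set S : ℝ := ∑ j ∈ Finset.Icc 1 M, ‖Ψ^[j] x - φ j‖ ^ 2 / (j : ℝ) ^ 2 with hS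
  have htnn : ∀ j ∈ Finset.Icc 1 M, (0:ℝ) ≤ ‖Ψ^[j] x - φ j‖ ^ 2 / (j : ℝ) ^ 2 := by
    intro j _; positivity
  have hSnn : 0 ≤ S := Finset.sum_nonneg htnn
  -- norm of each relevant term bounded by M² times its weighted version
  have hterm : ∀ j, 1 ≤ j → j ≤ M → ‖Ψ^[j] x - φ j‖ ^ 2 ≤ (M:ℝ)^2 * S := by
    intro j hj1 hjM
    have hj0 : (0:ℝ) < (j:ℝ)^2 := by
      have : (0:ℕ) < j := hj1
      positivity
    have hjM' : (j:ℝ)^2 ≤ (M:ℝ)^2 := by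
      have : (j:ℝ) ≤ (M:ℝ) := by exact_mod_cast hjM
      nlinarith [Nat.cast_nonneg (α := ℝ) j]
    have hle : ‖Ψ^[j] x - φ j‖ ^ 2 / (j : ℝ) ^ 2 ≤ S := by
      exact Finset.single_le_sum htnn (Finset.mem_Icc.mpr ⟨hj1, hjM⟩)
    calc ‖Ψ^[j] x - φ j‖ ^ 2
        = (j:ℝ)^2 * (‖Ψ^[j] x - φ j‖ ^ 2 / (j : ℝ) ^ 2) := by field_simp
      _ ≤ (M:ℝ)^2 * (‖Ψ^[j] x - φ j‖ ^ 2 / (j : ℝ) ^ 2) := by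
          apply mul_le_mul_of_nonneg_right hjM'; positivity
      _ ≤ (M:ℝ)^2 * S := by
          apply mul_le_mul_of_nonneg_left hle; positivity
  -- splitting
  have key : ‖Ψ (φ (m-1)) - φ m‖^2 ≤
      2*C^2*‖Ψ^[m-1] x - φ (m-1)‖^2 + 2*‖Ψ^[m] x - φ m‖^2 := by
    have hiter : Ψ^[m] x = Ψ (Ψ^[m-1] x) := by
      conv_lhs => rw [show m = (m-1)+1 by omega]
      rw [Function.iterate_succ_apply']
    have h1 : ‖Ψ (φ (m-1)) - Ψ^[m] x‖ ≤ C * ‖Ψ^[m-1] x - φ (m-1)‖ := by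
      rw [hiter]
      calc ‖Ψ (φ (m-1)) - Ψ (Ψ^[m-1] x)‖ ≤ C * ‖φ (m-1) - Ψ^[m-1] x‖ := hLip _ _
        _ = C * ‖Ψ^[m-1] x - φ (m-1)‖ := by rw [norm_sub_rev]
    have hsplit : Ψ (φ (m-1)) - φ m = (Ψ (φ (m-1)) - Ψ^[m] x) + (Ψ^[m] x - φ m) := by abel
    have h2 := norm_add_le (Ψ (φ (m-1)) - Ψ^[m] x) (Ψ^[m] x - φ m)
    rw [← hsplit] at h2
    nlinarith [norm_nonneg (Ψ (φ (m-1)) - Ψ^[m] x), norm_nonneg (Ψ^[m] x - φ m),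
      norm_nonneg (Ψ (φ (m-1)) - φ m), norm_nonneg (Ψ^[m-1] x - φ (m-1)),
      sq_nonneg (‖Ψ (φ (m-1)) - Ψ^[m] x‖ - ‖Ψ^[m] x - φ m‖),
      mul_nonneg hC (norm_nonneg (Ψ^[m-1] x - φ (m-1)))]
  have hB : ‖Ψ^[m] x - φ m‖^2 ≤ (M:ℝ)^2 * S := hterm m hm1 hmM
  have hA : ‖Ψ^[m-1] x - φ (m-1)‖^2 ≤ (M:ℝ)^2 * S := by
    rcases Nat.eq_or_lt_of_le hm1 with h | h
    · have : m - 1 = 0 := by omega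
      rw [this]
      simp only [Function.iterate_zero_apply, hφ0, sub_self, norm_zero]
      simpa using mul_nonneg (sq_nonneg (M:ℝ)) hSnn
    · exact hterm (m-1) (by omega) (by omega)
  nlinarith [sq_nonneg C]
end
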